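/- arXiv:2005.13494 — 3 statements merged into one kernel-verified Lean document; each statement's English description precedes it below -/
import Mathlib

section
/- Let b be a bilinear form on E such that b and its symmetric part b_s are nondegenerate. Define H^b := b^{-t} ∘ b and S^b := b_s^{-1} ∘ b_a (as endomorphisms of E, via the induced maps E → E*). Then S^b = (H^b + 1)^{-1} (H^b − 1), provided H^b + 1 is invertible. -/
/-- For a bilinear form `b` with `b` and its symmetric part `b_s` invertible,
with `H^b := b^{-t} ∘ b` and `S^b := b_s^{-1} ∘ b_a`, if `H^b + 1` is invertible
then `S^b = (H^b + 1)⁻¹ (H^b - 1)`. -/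
theorem stmt2 {K E : Type*} [Field K] [AddCommGroup E] [Module K E]
    [FiniteDimensional K E]
    (h2 : (2 : K) ≠ 0) (b : E →ₗ[K] E →ₗ[K] K)
    (bti bsi : Module.Dual K E →ₗ[K] E)
    (hbt1 : bti ∘ₗ b.flip = LinearMap.id)
    (hbt2 : b.flip ∘ₗ bti = LinearMap.id)
    (hbs1 : bsi ∘ₗ ((2:K)⁻¹ • (b + b.flip)) = LinearMap.id)
    (hbs2 : ((2:K)⁻¹ • (b + b.flip)) ∘ₗ bsi = LinearMap.id)
    (J : Module.End K E)
    (hJ1 : ((bti ∘ₗ b : Module.End K E) + 1) * J = 1)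
    (hJ2 : J * ((bti ∘ₗ b : Module.End K E) + 1) = 1) :
    (bsi ∘ₗ ((2:K)⁻¹ • (b - b.flip)) : Module.End K E)
      = J * ((bti ∘ₗ b : Module.End K E) - 1) := by
  set bs : E →ₗ[K] Module.Dual K E := (2:K)⁻¹ • (b + b.flip) with hbsdef
  set ba : E →ₗ[K] Module.Dual K E := (2:K)⁻¹ • (b - b.flip) with hbadef
  set S : Module.End K E := bsi ∘ₗ ba with hSdef
  set H : Module.End K E := bti ∘ₗ b with hHdef
  have hsum : bs + ba = b := by
    rw [hbsdef, hbadef, ← smul_add]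
    have h : (b + b.flip) + (b - b.flip) = (2:K) • b := by
      rw [two_smul]; abel
    rw [h, smul_smul, inv_mul_cancel₀ h2, one_smul]
  have hdiff : bs - ba = b.flip := by
    rw [hbsdef, hbadef, ← smul_sub ((2:K)⁻¹) (b + b.flip) (b - b.flip)]
    have h : (b + b.flip) - (b - b.flip) = (2:K) • b.flip := by
      rw [two_smul]; abel
    rw [h, smul_smul, inv_mul_cancel₀ h2, one_smul]
  -- b_s ∘ (1 + S) = b
  have h1 : bs ∘ₗ ((1 : Module.End K E) + S) = b := by
    have : bs ∘ₗ ((1 : Module.End K E) + S) = bs + (bs ∘ₗ bsi) ∘ₗ ba := by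
      ext x; simp [hSdef]
    rw [this, hbs2, LinearMap.id_comp, hsum]
  -- b_s ∘ (1 - S) = b.flip
  have h1' : bs ∘ₗ ((1 : Module.End K E) - S) = b.flip := by
    have : bs ∘ₗ ((1 : Module.End K E) - S) = bs - (bs ∘ₗ bsi) ∘ₗ ba := by
      ext x; simp [hSdef]
    rw [this, hbs2, LinearMap.id_comp, hdiff]
  -- key : (1 - S) * H = 1 + S
  have e1 : bs ∘ₗ (((1 : Module.End K E) - S) * H) = b := by
    show bs ∘ₗ (((1 : Module.End K E) - S) ∘ₗ H) = b
    rw [← LinearMap.comp_assoc, h1', hHdef, ← LinearMap.comp_assoc, hbt2,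
      LinearMap.id_comp]
  have key : ((1 : Module.End K E) - S) * H = 1 + S := by
    have e := e1.trans h1.symm
    have e' := congrArg (fun f => bsi ∘ₗ f) e
    simpa only [← LinearMap.comp_assoc, hbs1, LinearMap.id_comp] using e'
  -- S * (H + 1) = H - 1
  have hSH : S * (H + 1) = H - 1 := by
    have hk : S * H = H - (1 + S) := by
      have : H - S * H = 1 + S := by rw [← key]; noncomm_ring
      rw [← this]; noncomm_ring
    rw [mul_add, mul_one, hk]; abel
  -- S = (H - 1) * J
  have hfin : S = (H - 1) * J := by
    calc S = S * ((H + 1) * J) := by rw [hJ1, mul_one]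
    _ = (S * (H + 1)) * J := by rw [mul_assoc]
    _ = (H - 1) * J := by rw [hSH]
  -- J commutes with H - 1
  have hcomm : J * (H - 1) = (H - 1) * J := by
    calc J * (H - 1) = J * (H - 1) * ((H + 1) * J) := by rw [hJ1, mul_one]
    _ = J * ((H - 1) * (H + 1)) * J := by noncomm_ring
    _ = J * ((H + 1) * (H - 1)) * J := by noncomm_ring
    _ = (J * (H + 1)) * ((H - 1) * J) := by noncomm_ring
    _ = (H - 1) * J := by rw [hJ2, one_mul]
  rw [hcomm]; exact hfin
end

section
/- The operator H^b := b^{-t} b preserves both the symmetric part b_s and the skew part b_a of b: b_s(H^b x, H^b y) = b_s(x,y) and b_a(H^b x, H^b y) = b_a(x,y) for all x, y ∈ E. In particular H^b lies in the intersection of the orthogonal group of b_s and the symplectic group of b_a. -/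
/-- The operator `H^b := b^{-t} ∘ b` preserves both the symmetric part `b_s` and
the skew part `b_a` of `b`. -/
theorem stmt5 {K E : Type*} [Field K] [AddCommGroup E] [Module K E]
    [FiniteDimensional K E]
    (h2 : (2 : K) ≠ 0) (b : E →ₗ[K] E →ₗ[K] K)
    (bti bsi : Module.Dual K E →ₗ[K] E)
    (hbt1 : bti ∘ₗ b.flip = LinearMap.id)
    (hbt2 : b.flip ∘ₗ bti = LinearMap.id)
    (hbs1 : bsi ∘ₗ ((2:K)⁻¹ • (b + b.flip)) = LinearMap.id)
    (hbs2 : ((2:K)⁻¹ • (b + b.flip)) ∘ₗ bsi = LinearMap.id) :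
    ∀ x y : E,
      ((2:K)⁻¹ • (b + b.flip)) ((bti ∘ₗ b) x) ((bti ∘ₗ b) y)
          = ((2:K)⁻¹ • (b + b.flip)) x y ∧
      ((2:K)⁻¹ • (b - b.flip)) ((bti ∘ₗ b) x) ((bti ∘ₗ b) y)
          = ((2:K)⁻¹ • (b - b.flip)) x y := by
  intro x y
  have key : ∀ u v : E, b v ((bti ∘ₗ b) u) = b u v := by
    intro u v
    have h := LinearMap.congr_fun (LinearMap.congr_fun hbt2 (b u)) v
    simpa using h
  have hxy : b ((bti ∘ₗ b) x) ((bti ∘ₗ b) y) = b x y :=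
    (key y _).trans (key x y)
  have hyx : b ((bti ∘ₗ b) y) ((bti ∘ₗ b) x) = b y x :=
    (key x _).trans (key y x)
  simp only [LinearMap.comp_apply] at hxy hyx
  constructor <;>
    simp [LinearMap.flip_apply, hxy, hyx]
end

section
/- Two bilinear forms b and b' on E with b_s, b'_s invertible are GL(E)-equivalent (via the action (A∘b)(x,y)=b(A^{-1}x,A^{-1}y)) if and only if there exists A ∈ GL(E) such that simultaneously A∘b_s = b'_s and A S^b A^{-1} = S^{b'}. -/
/-- Two bilinear forms `b`, `b'` with invertible symmetric parts are
`GL(E)`-equivalent iff some `A ∈ GL(E)` simultaneously maps `b_s` to `b'_s` and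
conjugates `S^b` to `S^{b'}`. -/
theorem stmt9 {K E : Type*} [Field K] [AddCommGroup E] [Module K E]
    [FiniteDimensional K E]
    (h2 : (2 : K) ≠ 0) (b b' : E →ₗ[K] E →ₗ[K] K)
    (bsi bsi' : Module.Dual K E →ₗ[K] E)
    (hbs1 : bsi ∘ₗ ((2:K)⁻¹ • (b + b.flip)) = LinearMap.id)
    (hbs2 : ((2:K)⁻¹ • (b + b.flip)) ∘ₗ bsi = LinearMap.id)
    (hbs1' : bsi' ∘ₗ ((2:K)⁻¹ • (b' + b'.flip)) = LinearMap.id)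
    (hbs2' : ((2:K)⁻¹ • (b' + b'.flip)) ∘ₗ bsi' = LinearMap.id) :
    (∃ A : E ≃ₗ[K] E,
        b' = b.compl₁₂ (A.symm : E →ₗ[K] E) (A.symm : E →ₗ[K] E)) ↔
    (∃ A : E ≃ₗ[K] E,
        (2:K)⁻¹ • (b' + b'.flip)
          = ((2:K)⁻¹ • (b + b.flip)).compl₁₂ (A.symm : E →ₗ[K] E) (A.symm : E →ₗ[K] E)
        ∧ (bsi' ∘ₗ ((2:K)⁻¹ • (b' - b'.flip)) : E →ₗ[K] E)
          = (A : E →ₗ[K] E) ∘ₗ (bsi ∘ₗ ((2:K)⁻¹ • (b - b.flip))) ∘ₗ (A.symm : E →ₗ[K] E)) := by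
  -- pointwise versions of the inverse hypotheses
  have hsi : ∀ φ : Module.Dual K E, ((2:K)⁻¹ • (b + b.flip)) (bsi φ) = φ :=
    fun φ => by simpa using LinearMap.congr_fun hbs2 φ
  have hsi1' : ∀ x : E, bsi' (((2:K)⁻¹ • (b' + b'.flip)) x) = x :=
    fun x => by simpa using LinearMap.congr_fun hbs1' x
  have hsi2' : ∀ φ : Module.Dual K E, ((2:K)⁻¹ • (b' + b'.flip)) (bsi' φ) = φ :=
    fun φ => by simpa using LinearMap.congr_fun hbs2' φ
  constructor
  · rintro ⟨A, hA⟩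
    subst hA
    refine ⟨A, ?_, ?_⟩
    · ext x y
      simp [LinearMap.compl₁₂_apply, LinearMap.flip_apply, LinearMap.smul_apply,
        LinearMap.add_apply]
    · set c := b.compl₁₂ (A.symm : E →ₗ[K] E) (A.symm : E →ₗ[K] E) with hc
      have hba' : ∀ x y, ((2:K)⁻¹ • (c - c.flip)) x y
          = ((2:K)⁻¹ • (b - b.flip)) (A.symm x) (A.symm y) := by
        intro x y
        simp [hc, LinearMap.compl₁₂_apply, LinearMap.flip_apply, LinearMap.smul_apply,
          LinearMap.sub_apply]
      have hbs' : ∀ (z : E) (y : E), ((2:K)⁻¹ • (c + c.flip)) z y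
          = ((2:K)⁻¹ • (b + b.flip)) (A.symm z) (A.symm y) := by
        intro z y
        simp [hc, LinearMap.compl₁₂_apply, LinearMap.flip_apply, LinearMap.smul_apply,
          LinearMap.add_apply]
      have key : ∀ x, ((2:K)⁻¹ • (c - c.flip)) x
          = ((2:K)⁻¹ • (c + c.flip))
              (A (bsi (((2:K)⁻¹ • (b - b.flip)) (A.symm x)))) := by
        intro x
        ext y
        rw [hbs' (A (bsi (((2:K)⁻¹ • (b - b.flip)) (A.symm x)))) y,
          A.symm_apply_apply, hsi (((2:K)⁻¹ • (b - b.flip)) (A.symm x))]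
        exact hba' x y
      ext x
      simp only [LinearMap.comp_apply, LinearEquiv.coe_coe]
      rw [key x, hsi1']
  · rintro ⟨A, h1, h2'⟩
    refine ⟨A, ?_⟩
    have hsplit : ∀ (c : E →ₗ[K] E →ₗ[K] K) (x y : E),
        c x y = ((2:K)⁻¹ • (c + c.flip)) x y + ((2:K)⁻¹ • (c - c.flip)) x y := by
      intro c x y
      simp only [LinearMap.smul_apply, LinearMap.add_apply, LinearMap.sub_apply,
        LinearMap.flip_apply, smul_eq_mul]
      field_simp
      ring
    have hbs' : ∀ (z y : E), ((2:K)⁻¹ • (b' + b'.flip)) z y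
        = ((2:K)⁻¹ • (b + b.flip)) (A.symm z) (A.symm y) := by
      intro z y
      have := LinearMap.congr_fun (LinearMap.congr_fun h1 z) y
      simpa [LinearMap.compl₁₂_apply] using this
    have hba' : ∀ (x y : E), ((2:K)⁻¹ • (b' - b'.flip)) x y
        = ((2:K)⁻¹ • (b - b.flip)) (A.symm x) (A.symm y) := by
      intro x y
      have hx : bsi' (((2:K)⁻¹ • (b' - b'.flip)) x)
          = A (bsi (((2:K)⁻¹ • (b - b.flip)) (A.symm x))) := by
        have := LinearMap.congr_fun h2' x
        simpa [LinearMap.comp_apply] using this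
      have hx2 : ((2:K)⁻¹ • (b' - b'.flip)) x
          = ((2:K)⁻¹ • (b' + b'.flip)) (A (bsi (((2:K)⁻¹ • (b - b.flip)) (A.symm x)))) := by
        rw [← hx, hsi2']
      calc ((2:K)⁻¹ • (b' - b'.flip)) x y
          = ((2:K)⁻¹ • (b' + b'.flip))
              (A (bsi (((2:K)⁻¹ • (b - b.flip)) (A.symm x)))) y := by rw [hx2]
        _ = ((2:K)⁻¹ • (b + b.flip))
              (bsi (((2:K)⁻¹ • (b - b.flip)) (A.symm x))) (A.symm y) := by
              rw [hbs', A.symm_apply_apply]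
        _ = ((2:K)⁻¹ • (b - b.flip)) (A.symm x) (A.symm y) := by
              rw [hsi]
    ext x y
    rw [LinearMap.compl₁₂_apply]
    simp only [LinearEquiv.coe_coe]
    rw [hsplit b' x y, hbs', hba']
    exact (hsplit b _ _).symm
end
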